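/- (Theorem 4) The tontine fund (I, π, f) is collectively actuarially fair for its participants, i.e. (Σ_{j=1}^{n} π_j)·(1+R) = E[Σ_{j=1}^{n} W_j], if and only if it is actuarially fair for the administrator, i.e. π_{n+1}·(1+R) = E[W_{n+1}]; equivalently, both conditions hold exactly when π_{n+1} = (Σ_{j=1}^{n} π_j) · P[I_{n+1} = 1] / P[I_{n+1} = 0]. -/

import Mathlib

/-!
On every outcome the administrator's indicator is `∏ j, (1 - I j) ∈ {0, 1}`, and it equals `1`
exactly when all participants' indicators vanish. Hence the administrator's share of the fund is
`Iadm` itself and the participants' joint share is `1 - Iadm`: the whole fund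
`c = (1 + R) (Σ π_j + π_adm)` is always paid out. Taking expectations, the participants receive
`c · P[Iadm = 0]` and the administrator `c · P[Iadm = 1]`; as the accumulated premiums
`(1 + R) Σ π_j` and `(1 + R) π_adm` also add up to `c`, one side is fair iff the other is, and
solving `π_adm = (Σ π_j + π_adm) · P[Iadm = 1]` for `π_adm` gives the fair premium.
-/

open MeasureTheory Finset

section Shares

variable {ι : Type*} [Fintype ι] {x : ι → ℝ} {f : ι → ℝ} {fadm : ℝ}

lemma prod_one_sub_eq_ite (hx : ∀ j, x j = 0 ∨ x j = 1) :
    ∏ j, (1 - x j) = if ∀ j, x j = 0 then 1 else 0 := by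
  split_ifs with h
  · simp [h]
  · obtain ⟨j, hj⟩ := not_forall.1 h
    exact prod_eq_zero (mem_univ j) (by simp [(hx j).resolve_left hj])

lemma prod_one_sub_eq_zero_or_one (hx : ∀ j, x j = 0 ∨ x j = 1) :
    ∏ j, (1 - x j) = 0 ∨ ∏ j, (1 - x j) = 1 := by
  rw [prod_one_sub_eq_ite hx]
  split_ifs <;> simp

lemma admin_share_eq (hx : ∀ j, x j = 0 ∨ x j = 1) (hfadm : 0 < fadm) :
    fadm * (∏ j, (1 - x j)) / (∑ j, f j * x j + fadm * ∏ j, (1 - x j)) =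
      ∏ j, (1 - x j) := by
  rw [prod_one_sub_eq_ite hx]
  split_ifs with h
  · simp [h, hfadm.ne']
  · simp

lemma weighted_sum_add_pos (hx : ∀ j, x j = 0 ∨ x j = 1) (hf : ∀ j, 0 < f j)
    (hfadm : 0 < fadm) : 0 < ∑ j, f j * x j + fadm * ∏ j, (1 - x j) := by
  rw [prod_one_sub_eq_ite hx]
  split_ifs with h
  · simp [h, hfadm]
  · obtain ⟨j, hj⟩ := not_forall.1 h
    have hx_nonneg : ∀ i, 0 ≤ x i := fun i => by rcases hx i with hxi | hxi <;> simp [hxi]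
    simpa using sum_pos' (fun i _ => mul_nonneg (hf i).le (hx_nonneg i))
      ⟨j, mem_univ j, by simp [(hx j).resolve_left hj, hf j]⟩

lemma participants_share_eq (hx : ∀ j, x j = 0 ∨ x j = 1) (hf : ∀ j, 0 < f j)
    (hfadm : 0 < fadm) :
    (∑ j, f j * x j) / (∑ j, f j * x j + fadm * ∏ j, (1 - x j)) = 1 - ∏ j, (1 - x j) := by
  have hsum : (∑ j, f j * x j) / (∑ j, f j * x j + fadm * ∏ j, (1 - x j)) +
      fadm * (∏ j, (1 - x j)) / (∑ j, f j * x j + fadm * ∏ j, (1 - x j)) = 1 := by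
    rw [← add_div, div_self (weighted_sum_add_pos hx hf hfadm).ne']
  linear_combination hsum - admin_share_eq (f := f) hx hfadm

end Shares

section ZeroOneValued

variable {Ω : Type*} [MeasurableSpace Ω] {P : Measure Ω} {g : Ω → ℝ}

lemma integral_eq_measureReal_of_zero_or_one (hg : ∀ ω, g ω = 0 ∨ g ω = 1)
    (hmeas : Measurable g) : ∫ ω, g ω ∂P = P.real {ω | g ω = 1} := by
  have hg_ind : g = {ω | g ω = 1}.indicator 1 := by
    funext ω
    rcases hg ω with h | h <;> simp [h]
  have hset : MeasurableSet {ω | g ω = 1} := hmeas (measurableSet_singleton 1)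
  rw [congrArg (fun h => ∫ ω, h ω ∂P) hg_ind, integral_indicator_one hset]

lemma integral_one_sub_eq_measureReal_of_zero_or_one (hg : ∀ ω, g ω = 0 ∨ g ω = 1)
    (hmeas : Measurable g) : ∫ ω, (1 - g ω) ∂P = P.real {ω | g ω = 0} := by
  have hset : {ω | 1 - g ω = 1} = {ω | g ω = 0} := by
    ext ω
    simp
  have hg' : ∀ ω, 1 - g ω = 0 ∨ 1 - g ω = 1 := fun ω => by
    rcases hg ω with h | h <;> simp [h]
  rw [integral_eq_measureReal_of_zero_or_one (g := fun ω => 1 - g ω) hg'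
    (measurable_const.sub hmeas), hset]

lemma measureReal_eq_zero_eq_one_sub [IsProbabilityMeasure P] (hg : ∀ ω, g ω = 0 ∨ g ω = 1)
    (hmeas : Measurable g) : P.real {ω | g ω = 0} = 1 - P.real {ω | g ω = 1} := by
  have hset : {ω | g ω = 0} = {ω | g ω = 1}ᶜ := by
    ext ω
    rcases hg ω with h | h <;> simp [h]
  have hset_meas : MeasurableSet {ω | g ω = 1} := hmeas (measurableSet_singleton 1)
  exact hset ▸ probReal_compl_eq_one_sub hset_meas

end ZeroOneValued

lemma mul_eq_mul_add_mul_iff_eq_mul_div_one_sub {k p a s : ℝ} (hk : k ≠ 0) (hp : p ≠ 1) :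
    a * k = k * (s + a) * p ↔ a = s * p / (1 - p) :=
  calc a * k = k * (s + a) * p ↔ k * (a * (1 - p)) = k * (s * p) := by
        constructor <;> intro h <;> linarith
    _ ↔ a * (1 - p) = s * p := mul_right_inj' hk
    _ ↔ a = s * p / (1 - p) := (eq_div_iff (sub_ne_zero.2 hp.symm)).symm

theorem tontine_collective_fairness_iff_administrator_fairness_general
    {Ω : Type*} [MeasurableSpace Ω] (P : Measure Ω) [IsProbabilityMeasure P]
    (n : ℕ)
    (I : Fin n → Ω → ℝ) (hI01 : ∀ j ω, I j ω = 0 ∨ I j ω = 1)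
    (hImeas : ∀ j, Measurable (I j))
    (Iadm : Ω → ℝ) (hIadm : ∀ ω, Iadm ω = ∏ j, (1 - I j ω))
    (hadm1 : P {ω | Iadm ω = 1} < 1)
    (π : Fin n → ℝ) (πadm : ℝ)
    (f : Fin n → ℝ) (hf : ∀ j, 0 < f j) (fadm : ℝ) (hfadm : 0 < fadm)
    (R : ℝ) (hR : 0 ≤ R)
    (W : Fin n → Ω → ℝ)
    (hW : ∀ i ω, W i ω =
      (1 + R) * ((∑ j, π j) + πadm) * (f i * I i ω) /
        ((∑ j, f j * I j ω) + fadm * Iadm ω))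
    (Wadm : Ω → ℝ)
    (hWadm : ∀ ω, Wadm ω =
      (1 + R) * ((∑ j, π j) + πadm) * (fadm * Iadm ω) /
        ((∑ j, f j * I j ω) + fadm * Iadm ω)) :
    ((∑ j, π j) * (1 + R) = ∫ ω, (∑ j, W j ω) ∂P ↔
      πadm * (1 + R) = ∫ ω, Wadm ω ∂P) ∧
    (πadm * (1 + R) = ∫ ω, Wadm ω ∂P ↔
      πadm = (∑ j, π j) *
        (P {ω | Iadm ω = 1}).toReal / (P {ω | Iadm ω = 0}).toReal) := by
  set c := (1 + R) * ((∑ j, π j) + πadm)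
  have hIadm01 : ∀ ω, Iadm ω = 0 ∨ Iadm ω = 1 := fun ω => by
    rw [hIadm]
    exact prod_one_sub_eq_zero_or_one (hI01 · ω)
  have hIadm_meas : Measurable Iadm := by
    rw [funext hIadm]
    exact measurable_prod _ fun j _ => measurable_const.sub (hImeas j)
  have hWadm_eq : ∀ ω, Wadm ω = c * Iadm ω := fun ω => by
    rw [hWadm, mul_div_assoc, hIadm, admin_share_eq (hI01 · ω) hfadm]
  have hWsum_eq : ∀ ω, ∑ j, W j ω = c * (1 - Iadm ω) := fun ω => by
    simp only [hW]
    rw [← sum_div, ← mul_sum, mul_div_assoc, hIadm, participants_share_eq (hI01 · ω) hf hfadm]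
  have hp_ne_one : P.real {ω | Iadm ω = 1} ≠ 1 := by
    have hp_lt := (ENNReal.toReal_lt_toReal (measure_ne_top _ _) ENNReal.one_ne_top).2 hadm1
    simpa [measureReal_def] using hp_lt.ne
  simp only [hWadm_eq, hWsum_eq, integral_const_mul, ← measureReal_def,
    integral_eq_measureReal_of_zero_or_one hIadm01 hIadm_meas,
    integral_one_sub_eq_measureReal_of_zero_or_one hIadm01 hIadm_meas,
    measureReal_eq_zero_eq_one_sub hIadm01 hIadm_meas]
  refine ⟨by constructor <;> intro h <;> linarith, ?_⟩
  exact mul_eq_mul_add_mul_iff_eq_mul_div_one_sub (by positivity) hp_ne_one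

/-- Theorem 4: the tontine fund is collectively actuarially fair for its participants,
`(Σ_{j=1}^n π_j)·(1+R) = E[Σ_{j=1}^n W_j]`, if and only if it is actuarially fair for the
administrator, `π_{n+1}·(1+R) = E[W_{n+1}]`; equivalently, both hold exactly when
`π_{n+1} = (Σ_{j=1}^n π_j) · P[I_{n+1}=1]/P[I_{n+1}=0]`. -/
theorem tontine_collective_fairness_iff_administrator_fairness
    {Ω : Type*} [MeasurableSpace Ω] (P : Measure Ω) [IsProbabilityMeasure P]
    (n : ℕ) (hn : 1 ≤ n)
    (I : Fin n → Ω → ℝ) (hI01 : ∀ j ω, I j ω = 0 ∨ I j ω = 1)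
    (hImeas : ∀ j, Measurable (I j))
    (Iadm : Ω → ℝ) (hIadm : ∀ ω, Iadm ω = ∏ j, (1 - I j ω))
    (hadm0 : 0 < P {ω | Iadm ω = 1}) (hadm1 : P {ω | Iadm ω = 1} < 1)
    (π : Fin n → ℝ) (hπ : ∀ j, 0 < π j) (πadm : ℝ) (hπadm : 0 ≤ πadm)
    (f : Fin n → ℝ) (hf : ∀ j, 0 < f j) (fadm : ℝ) (hfadm : 0 < fadm)
    (R : ℝ) (hR : 0 ≤ R)
    (W : Fin n → Ω → ℝ)
    (hW : ∀ i ω, W i ω =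
      (1 + R) * ((∑ j, π j) + πadm) * (f i * I i ω) /
        ((∑ j, f j * I j ω) + fadm * Iadm ω))
    (Wadm : Ω → ℝ)
    (hWadm : ∀ ω, Wadm ω =
      (1 + R) * ((∑ j, π j) + πadm) * (fadm * Iadm ω) /
        ((∑ j, f j * I j ω) + fadm * Iadm ω)) :
    ((∑ j, π j) * (1 + R) = ∫ ω, (∑ j, W j ω) ∂P ↔
      πadm * (1 + R) = ∫ ω, Wadm ω ∂P) ∧
    (πadm * (1 + R) = ∫ ω, Wadm ω ∂P ↔
      πadm = (∑ j, π j) *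
        (P {ω | Iadm ω = 1}).toReal / (P {ω | Iadm ω = 0}).toReal) :=
  tontine_collective_fairness_iff_administrator_fairness_general P n I hI01 hImeas Iadm hIadm hadm1
    π πadm f hf fadm hfadm R hR W hW Wadm hWadm
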